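/- Fix κ > 0, ξ > 0 and t > 0, and define ρ± := e^{−2κt}·(ξ(e^{2κt} − 1) ± (e^{κt} + 1)·√(16κ²e^{2κt} + ξ²(1 − e^{κt})²)) / (8κ). Then: (a) −1 < ρ₋ < 0; (b) ρ₊ > 1/2; (c) if moreover κ/ξ > ρ₊, then ρ₊ < 1. Furthermore, for t = 0 one has ρ₊ = 1 and ρ₋ = −1. -/

import Mathlib

/-! For `t > 0` put `u = e^{−κt} ∈ (0, 1)`. By Vieta, `ρ₊ + ρ₋ = ξ(1 − u²)/(4κ) > 0` and
`ρ₊ρ₋ = −(1 + u)²/4`, so `ρ₋ ≤ ρ₊` are the roots of `q(x) = x² − ξ(1 − u²)/(4κ)·x − (1 + u)²/4`.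
Since `q(0) < 0` and `q(1/2) < 0`, both points lie between the roots; since `q(−1) > 0` the point
`−1` lies below `ρ₋`; and if `ξ < 2κ` (which follows from `1/2 < ρ₊ < κ/ξ`) then
`q(1) > (1 − u)²/4 ≥ 0`, so `1` lies above `ρ₊`. -/

open Filter Topology Set

/-- `ρ₊ := e^{−2κt}(ξ(e^{2κt} − 1) + (e^{κt} + 1)√(16κ²e^{2κt} + ξ²(1 − e^{κt})²))/(8κ)`. -/
noncomputable def rhoPlus (κ ξ t : ℝ) : ℝ :=
  Real.exp (-2 * κ * t) * (ξ * (Real.exp (2 * κ * t) - 1) +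
    (Real.exp (κ * t) + 1) *
      Real.sqrt (16 * κ ^ 2 * Real.exp (2 * κ * t) + ξ ^ 2 * (1 - Real.exp (κ * t)) ^ 2)) /
    (8 * κ)

/-- `ρ₋ := e^{−2κt}(ξ(e^{2κt} − 1) − (e^{κt} + 1)√(16κ²e^{2κt} + ξ²(1 − e^{κt})²))/(8κ)`. -/
noncomputable def rhoMinus (κ ξ t : ℝ) : ℝ :=
  Real.exp (-2 * κ * t) * (ξ * (Real.exp (2 * κ * t) - 1) -
    (Real.exp (κ * t) + 1) *
      Real.sqrt (16 * κ ^ 2 * Real.exp (2 * κ * t) + ξ ^ 2 * (1 - Real.exp (κ * t)) ^ 2)) /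
    (8 * κ)

section Roots

variable {α : Type*} [CommRing α] [LinearOrder α] [IsStrictOrderedRing α] {a b x : α}

theorem mem_Ioo_of_sub_mul_sub_neg (hab : a ≤ b) (h : (x - b) * (x - a) < 0) : x ∈ Ioo a b := by
  constructor <;> nlinarith

theorem lt_of_sub_mul_sub_pos_of_lt (h : 0 < (x - b) * (x - a)) (hxb : x < b) : x < a := by
  nlinarith

theorem lt_of_sub_mul_sub_pos_of_gt (h : 0 < (x - b) * (x - a)) (hax : a < x) : b < x := by
  nlinarith

end Roots

open Real

section Vieta

variable (κ ξ t : ℝ)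

theorem rhoMinus_le_rhoPlus (hκ : 0 < κ) : rhoMinus κ ξ t ≤ rhoPlus κ ξ t := by
  unfold rhoMinus rhoPlus
  gcongr
  have : 0 ≤ (exp (κ * t) + 1) * √(16 * κ ^ 2 * exp (2 * κ * t) + ξ ^ 2 * (1 - exp (κ * t)) ^ 2) := by
    positivity
  linarith

theorem rhoPlus_add_rhoMinus :
    rhoPlus κ ξ t + rhoMinus κ ξ t = ξ * (1 - exp (-(κ * t)) ^ 2) / (4 * κ) := by
  have h₁ : exp (-2 * κ * t) = exp (-(κ * t)) ^ 2 := by rw [sq, ← exp_add]; ring_nf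
  have h₂ : exp (2 * κ * t) * exp (-(κ * t)) ^ 2 = 1 := by
    rw [sq, ← exp_add, ← exp_add]; ring_nf; exact exp_zero
  unfold rhoPlus rhoMinus
  rw [h₁]
  linear_combination (ξ / (4 * κ)) * h₂

theorem rhoPlus_mul_rhoMinus (hκ : κ ≠ 0) :
    rhoPlus κ ξ t * rhoMinus κ ξ t = -(1 + exp (-(κ * t))) ^ 2 / 4 := by
  have h₁ : exp (-2 * κ * t) = exp (-(κ * t)) ^ 2 := by rw [sq, ← exp_add]; ring_nf
  have h₂ : exp (2 * κ * t) = exp (κ * t) ^ 2 := by rw [sq, ← exp_add]; ring_nf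
  have hEu : exp (κ * t) * exp (-(κ * t)) = 1 := by rw [← exp_add]; simp
  unfold rhoPlus rhoMinus
  rw [h₁, h₂]
  set E := exp (κ * t)
  set u := exp (-(κ * t))
  have hS := sq_sqrt (show 0 ≤ 16 * κ ^ 2 * E ^ 2 + ξ ^ 2 * (1 - E) ^ 2 by positivity)
  generalize √(16 * κ ^ 2 * E ^ 2 + ξ ^ 2 * (1 - E) ^ 2) = S at hS ⊢
  rw [div_mul_div_comm, div_eq_div_iff (by positivity) (by norm_num)]
  -- the `hEu` coefficient comes from `u²E(E + 1) = 1 + u`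
  linear_combination (-4 * u ^ 4 * (E + 1) ^ 2) * hS
    - 64 * κ ^ 2 * (E * u + 1 + u) * (u ^ 2 * E * (E + 1) + 1 + u) * hEu

theorem sub_rhoPlus_mul_sub_rhoMinus (hκ : κ ≠ 0) (x : ℝ) :
    (x - rhoPlus κ ξ t) * (x - rhoMinus κ ξ t) =
      x ^ 2 - ξ * (1 - exp (-(κ * t)) ^ 2) / (4 * κ) * x - (1 + exp (-(κ * t))) ^ 2 / 4 := by
  linear_combination (-x) * rhoPlus_add_rhoMinus κ ξ t + rhoPlus_mul_rhoMinus κ ξ t hκ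

end Vieta

section Initial

variable (κ ξ : ℝ)

theorem sqrt_discriminant_at_zero (hκ : 0 < κ) :
    √(16 * κ ^ 2 * exp (2 * κ * 0) + ξ ^ 2 * (1 - exp (κ * 0)) ^ 2) = 4 * κ := by
  simp only [mul_zero, exp_zero, mul_one, sub_self]
  rw [show 16 * κ ^ 2 + ξ ^ 2 * 0 ^ 2 = (4 * κ) ^ 2 by ring]
  exact sqrt_sq (by positivity)

theorem rhoPlus_zero (hκ : 0 < κ) : rhoPlus κ ξ 0 = 1 := by
  rw [rhoPlus, sqrt_discriminant_at_zero κ ξ hκ]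
  simp only [mul_zero, exp_zero]
  field_simp
  ring

theorem rhoMinus_zero (hκ : 0 < κ) : rhoMinus κ ξ 0 = -1 := by
  rw [rhoMinus, sqrt_discriminant_at_zero κ ξ hκ]
  simp only [mul_zero, exp_zero]
  field_simp
  ring

end Initial

/-- Lemma 5.12(i) of the paper: for `κ, ξ > 0` and `t > 0`:
(a) `−1 < ρ₋ < 0`; (b) `ρ₊ > 1/2`; (c) if `κ/ξ > ρ₊` then `ρ₊ < 1`.
Furthermore, for `t = 0` one has `ρ₊ = 1` and `ρ₋ = −1`. -/
theorem statement15 (κ ξ : ℝ) (hκ : 0 < κ) (hξ : 0 < ξ) :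
    (∀ t : ℝ, 0 < t →
        (-1 < rhoMinus κ ξ t ∧ rhoMinus κ ξ t < 0) ∧
        (1 / 2 < rhoPlus κ ξ t) ∧
        (rhoPlus κ ξ t < κ / ξ → rhoPlus κ ξ t < 1)) ∧
      rhoPlus κ ξ 0 = 1 ∧ rhoMinus κ ξ 0 = -1 := by
  refine ⟨fun t ht => ?_, rhoPlus_zero κ ξ hκ, rhoMinus_zero κ ξ hκ⟩
  have hq := sub_rhoPlus_mul_sub_rhoMinus κ ξ t hκ.ne'
  have hle := rhoMinus_le_rhoPlus κ ξ t hκ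
  set u := exp (-(κ * t))
  have hu₀ : 0 < u := exp_pos _
  have hu₁ : u < 1 := exp_lt_one_iff.mpr (neg_neg_of_pos (mul_pos hκ ht))
  have hu₂ : 0 < 1 - u ^ 2 := by nlinarith
  set s := ξ * (1 - u ^ 2) / (4 * κ)
  have hs : 0 < s := by positivity
  have hminus_neg : rhoMinus κ ξ t < 0 :=
    (mem_Ioo_of_sub_mul_sub_neg hle (by rw [hq]; nlinarith)).1
  have hhalf : 1 / 2 < rhoPlus κ ξ t :=
    (mem_Ioo_of_sub_mul_sub_neg hle (by rw [hq]; nlinarith)).2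
  have hminus_gt : -1 < rhoMinus κ ξ t :=
    lt_of_sub_mul_sub_pos_of_lt (by rw [hq]; nlinarith) (by linarith)
  refine ⟨⟨hminus_gt, hminus_neg⟩, hhalf, fun hlt => ?_⟩
  have hξκ : ξ < 2 * κ := by
    have := hhalf.trans hlt
    rw [lt_div_iff₀ hξ] at this
    linarith
  have hs_lt : s < (1 - u ^ 2) / 2 := by
    rw [div_lt_div_iff₀ (by positivity) two_pos]
    nlinarith [mul_lt_mul_of_pos_left hξκ hu₂]
  exact lt_of_sub_mul_sub_pos_of_gt (by rw [hq]; nlinarith) (by linarith)
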